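/- Let μ > 0, a > 0, S = [0,a]^n ⊆ ℝ^n, b ∈ S, and u ∈ ℝ^n. Then the function x ↦ ‖x − b‖₁ + δ_S(x) + (μ/2)‖u − x‖² has a unique minimizer x̂ over ℝ^n, given componentwise by x̂_i = min(a, max(0, z_i)), where z_i = u_i − 1/μ if u_i > b_i + 1/μ, z_i = b_i if b_i − 1/μ ≤ u_i ≤ b_i + 1/μ, and z_i = u_i + 1/μ if u_i < b_i − 1/μ. -/

import Mathlib

open scoped RealInnerProductSpace
noncomputable section

/-- `Euc k` is the Euclidean space `ℝ^k`. -/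
abbrev Euc (k : ℕ) := EuclideanSpace ℝ (Fin k)

/-- `f` is proper: nowhere `-∞` and somewhere finite. -/
def IsProperFn {k : ℕ} (f : Euc k → EReal) : Prop :=
  (∀ x, f x ≠ ⊥) ∧ ∃ x, f x ≠ ⊤

/-- Convexity of an extended-real-valued function. -/
def IsConvexFn {k : ℕ} (f : Euc k → EReal) : Prop :=
  ∀ x y : Euc k, ∀ t : ℝ, 0 < t → t < 1 →
    f (t • x + (1 - t) • y) ≤ (t : EReal) * f x + ((1 - t : ℝ) : EReal) * f y

/-- `f` is proper, convex, lower semicontinuous with bounded effective domain. -/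
def NiceFn {k : ℕ} (f : Euc k → EReal) : Prop :=
  IsProperFn f ∧ IsConvexFn f ∧ LowerSemicontinuous f ∧
    Bornology.IsBounded {x | f x ≠ ⊤}

/-- The Fenchel conjugate `f*(q) = sup_x {⟨q,x⟩ - f(x)}` (real-valued). -/
noncomputable def conjFn {k : ℕ} (f : Euc k → EReal) (q : Euc k) : ℝ :=
  (⨆ x, ((⟪q, x⟫ : ℝ) : EReal) - f x).toReal

/-- The Fenchel conjugate as an extended real. -/
noncomputable def conjE {k : ℕ} (f : Euc k → EReal) (q : Euc k) : EReal :=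
  ⨆ x, ((⟪q, x⟫ : ℝ) : EReal) - f x

/-- The smoothed conjugate `f_r*(q) = sup_x {⟨q,x⟩ - f(x) - (r/2)‖x‖²}`. -/
noncomputable def conjSm {k : ℕ} (f : Euc k → EReal) (r : ℝ) (q : Euc k) : ℝ :=
  (⨆ x, ((⟪q, x⟫ - r / 2 * ‖x‖ ^ 2 : ℝ) : EReal) - f x).toReal

/-- The proximal objective `x ↦ f(x) + (r/2)‖u - x‖²`. -/
noncomputable def proxObj {k : ℕ} (f : Euc k → EReal) (r : ℝ) (u x : Euc k) : EReal :=
  f x + ((r / 2 * ‖u - x‖ ^ 2 : ℝ) : EReal)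

/-- `D_f = sup {‖x‖²/2 : x ∈ dom f}`. -/
noncomputable def Dsup {k : ℕ} (f : Euc k → EReal) : ℝ :=
  sSup ((fun x : Euc k => ‖x‖ ^ 2 / 2) '' {x | f x ≠ ⊤})

/-- `x0` is the unique global minimizer of `h`. -/
def UniqMin {α : Type*} {β : Type*} [Preorder β] (h : α → β) (x0 : α) : Prop :=
  (∀ x, h x0 ≤ h x) ∧ ∀ x, (∀ y, h x ≤ h y) → x = x0

/-- The dual objective `θ(p) = f*(A*p) + g*(-p)`. -/
noncomputable def theta {n m : ℕ} (f : Euc n → EReal) (g : Euc m → EReal)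
    (A : Euc n →L[ℝ] Euc m) (p : Euc m) : ℝ :=
  conjFn f (ContinuousLinearMap.adjoint A p) + conjFn g (-p)

/-- The singly smoothed dual objective `θ_{ρ,μ}(p) = f_ρ*(A*p) + g_μ*(-p)`. -/
noncomputable def thetaSm {n m : ℕ} (f : Euc n → EReal) (g : Euc m → EReal)
    (A : Euc n →L[ℝ] Euc m) (r s : ℝ) (p : Euc m) : ℝ :=
  conjSm f r (ContinuousLinearMap.adjoint A p) + conjSm g s (-p)

/-- The doubly smoothed dual objective `θ_{ρ,μ,κ}(p) = θ_{ρ,μ}(p) + (κ/2)‖p‖²`. -/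
noncomputable def thetaSmK {n m : ℕ} (f : Euc n → EReal) (g : Euc m → EReal)
    (A : Euc n →L[ℝ] Euc m) (r s c : ℝ) (p : Euc m) : ℝ :=
  thetaSm f g A r s p + c / 2 * ‖p‖ ^ 2

/-- The optimal value of the primal problem `v(P) = inf {f(x) + g(Ax)}`. -/
noncomputable def vPrimal {n m : ℕ} (f : Euc n → EReal) (g : Euc m → EReal)
    (A : Euc n →L[ℝ] Euc m) : EReal := ⨅ x, f x + g (A x)

/-- The optimal value of the dual problem `v(D) = -inf θ`. -/
noncomputable def vDual {n m : ℕ} (f : Euc n → EReal) (g : Euc m → EReal)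
    (A : Euc n →L[ℝ] Euc m) : ℝ := -(⨅ p, theta f g A p)

/-- The indicator function `δ_S` of a set, with values in the extended reals. -/
noncomputable def indicatorE {k : ℕ} (S : Set (Euc k)) (x : Euc k) : EReal :=
  @ite _ (x ∈ S) (Classical.propDecidable _) 0 ⊤

/-- The objective `x ↦ ‖x - b‖₁ + δ_{[0,a]^n}(x) + (μ/2)‖u - x‖²`. -/
noncomputable def obj19 (n : ℕ) (μ a : ℝ) (b u : Euc n) (x : Euc n) : EReal :=
  (((∑ i, |x i - b i|) + μ / 2 * ‖u - x‖ ^ 2 : ℝ) : EReal)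
    + indicatorE {v : Euc n | ∀ i, v i ∈ Set.Icc (0 : ℝ) a} x

/-! Coordinatewise, `φ(t) = |t - b| + (μ/2)(u - t)²` restricted to `[0,a]` is `μ`-strongly convex.
The soft-thresholded point `z` satisfies `μ(u - z) ∈ ∂|· - b|(z)`, and clipping `z` to `[0,a]`
keeps `s = μ(u - z)` a subgradient of `|· - b|` at `x̂ = clip z` (as `b ∈ [0,a]`) while
`μ(x̂ - u) + s = μ(x̂ - z)` lies in minus the normal cone of `[0,a]` at `x̂`. This optimality
condition gives the quadratic growth `φ(x̂) + (μ/2)(t - x̂)² ≤ φ(t)` on `[0,a]`; summing over the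
coordinates shows that `x̂` is a strict, hence unique, global minimizer. -/

open Set

section OneDim

variable {μ a b u x z t : ℝ}

lemma abs_sub_add_sq_le_of_subgradient {s : ℝ} (hs : |s| ≤ 1) (hsx : s * (x - b) = |x - b|)
    (hopt : 0 ≤ (μ * (x - u) + s) * (t - x)) :
    |x - b| + μ / 2 * (u - x) ^ 2 + μ / 2 * (t - x) ^ 2 ≤ |t - b| + μ / 2 * (u - t) ^ 2 := by
  have hst : s * (t - b) ≤ |t - b| := by
    calc s * (t - b) ≤ |s * (t - b)| := le_abs_self _
      _ ≤ |t - b| := by rw [abs_mul]; exact mul_le_of_le_one_left (abs_nonneg _) hs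
  nlinarith

lemma clip_sub_mul_sub_nonneg (ht : t ∈ Icc 0 a) :
    0 ≤ (min a (max 0 z) - z) * (t - min a (max 0 z)) := by
  obtain ⟨ht0, hta⟩ := ht
  rcases le_total z 0 with hz0 | hz0
  · rw [max_eq_left hz0, min_eq_right (ht0.trans hta)]
    nlinarith
  rcases le_total z a with hza | hza
  · simp [max_eq_right hz0, min_eq_right hza]
  · rw [max_eq_right hz0, min_eq_left hza]
    nlinarith

/-- Soft thresholding of `u` around `b`: the proximal point of `|· - b|` with step `1/μ`. -/
def proxAbs (μ b u : ℝ) : ℝ :=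
  if b + 1 / μ < u then u - 1 / μ else if u < b - 1 / μ then u + 1 / μ else b

lemma abs_mul_sub_proxAbs_le (hμ : 0 < μ) : |μ * (u - proxAbs μ b u)| ≤ 1 := by
  unfold proxAbs
  split_ifs with h₁ h₂
  · simp [hμ.ne']
  · simp [hμ.ne']
  · rw [not_lt] at h₁ h₂
    rw [abs_le]
    constructor
    · nlinarith [mul_le_mul_of_nonneg_left h₂ hμ.le, mul_one_div_cancel hμ.ne']
    · nlinarith [mul_le_mul_of_nonneg_left h₁ hμ.le, mul_one_div_cancel hμ.ne']

lemma mul_sub_proxAbs_mul_clip_sub (hμ : 0 < μ) (hb : b ∈ Icc 0 a) :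
    μ * (u - proxAbs μ b u) * (min a (max 0 (proxAbs μ b u)) - b)
      = |min a (max 0 (proxAbs μ b u)) - b| := by
  obtain ⟨hb0, hba⟩ := hb
  unfold proxAbs
  split_ifs with h₁ h₂
  · have hbx : b ≤ min a (max 0 (u - 1 / μ)) := le_min hba (le_max_of_le_right (by linarith))
    rw [abs_of_nonneg (sub_nonneg.mpr hbx)]
    field_simp
    ring
  · have hxb : min a (max 0 (u + 1 / μ)) ≤ b := min_le_of_right_le (max_le hb0 (by linarith))
    rw [abs_of_nonpos (sub_nonpos.mpr hxb)]
    field_simp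
    ring
  · simp [max_eq_right hb0, min_eq_right hba]

theorem clip_proxAbs_growth (hμ : 0 < μ) (hb : b ∈ Icc 0 a) (ht : t ∈ Icc 0 a)
    (hx : x = min a (max 0 (proxAbs μ b u))) :
    |x - b| + μ / 2 * (u - x) ^ 2 + μ / 2 * (t - x) ^ 2 ≤ |t - b| + μ / 2 * (u - t) ^ 2 := by
  subst hx
  refine abs_sub_add_sq_le_of_subgradient (abs_mul_sub_proxAbs_le hμ)
    (mul_sub_proxAbs_mul_clip_sub hμ hb) ?_
  rw [← mul_add, sub_add_sub_cancel, mul_assoc]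
  exact mul_nonneg hμ.le (clip_sub_mul_sub_nonneg ht)

end OneDim

theorem UniqMin.of_lt {α β : Type*} [Preorder β] {h : α → β} {x₀ : α}
    (h_lt : ∀ x, x ≠ x₀ → h x₀ < h x) : UniqMin h x₀ := by
  refine ⟨fun x => ?_, fun x hx => ?_⟩
  · rcases eq_or_ne x x₀ with rfl | hne
    · exact le_rfl
    · exact (h_lt x hne).le
  · by_contra hne
    exact (h_lt x hne).not_ge (hx x₀)

section Box

variable {n : ℕ} {μ a : ℝ} {b u : Euc n}

def proxL1Box (μ a : ℝ) (b u : Euc n) : Euc n :=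
  WithLp.toLp 2 fun i => min a (max 0 (proxAbs μ (b i) (u i)))

def l1DistProxObj (μ : ℝ) (b u x : Euc n) : ℝ :=
  (∑ i, |x i - b i|) + μ / 2 * ‖u - x‖ ^ 2

lemma proxL1Box_mem_box (hb : ∀ i, b i ∈ Icc 0 a) (i : Fin n) :
    proxL1Box μ a b u i ∈ Icc 0 a :=
  ⟨le_min ((hb i).1.trans (hb i).2) (le_max_left _ _), min_le_left _ _⟩

theorem l1DistProxObj_proxL1Box_add_le (hμ : 0 < μ) (hb : ∀ i, b i ∈ Icc 0 a) {y : Euc n}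
    (hy : ∀ i, y i ∈ Icc 0 a) :
    l1DistProxObj μ b u (proxL1Box μ a b u) + μ / 2 * ‖y - proxL1Box μ a b u‖ ^ 2
      ≤ l1DistProxObj μ b u y := by
  have hsum := Finset.sum_le_sum fun i (_ : i ∈ Finset.univ) =>
    clip_proxAbs_growth (u := u i) (x := proxL1Box μ a b u i) hμ (hb i) (hy i) rfl
  simp only [l1DistProxObj, EuclideanSpace.norm_sq_eq, Real.norm_eq_abs, sq_abs,
    PiLp.sub_apply, Finset.mul_sum, ← Finset.sum_add_distrib]
  linarith

lemma obj19_of_mem {x : Euc n} (hx : ∀ i, x i ∈ Icc 0 a) :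
    obj19 n μ a b u x = l1DistProxObj μ b u x := by
  rw [obj19, indicatorE, if_pos (by exact hx), add_zero, l1DistProxObj]

lemma obj19_of_not_mem {x : Euc n} (hx : ¬∀ i, x i ∈ Icc 0 a) : obj19 n μ a b u x = ⊤ := by
  rw [obj19, indicatorE, if_neg (by exact hx)]
  exact EReal.add_top_of_ne_bot (EReal.coe_ne_bot _)

theorem uniqMin_obj19_proxL1Box (hμ : 0 < μ) (hb : ∀ i, b i ∈ Icc 0 a) :
    UniqMin (obj19 n μ a b u) (proxL1Box μ a b u) := by
  refine UniqMin.of_lt fun y hne => ?_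
  rw [obj19_of_mem (proxL1Box_mem_box hb)]
  by_cases hy : ∀ i, y i ∈ Icc 0 a
  · rw [obj19_of_mem hy, EReal.coe_lt_coe_iff]
    have hgap : 0 < μ / 2 * ‖y - proxL1Box μ a b u‖ ^ 2 := by
      have := norm_pos_iff.mpr (sub_ne_zero.mpr hne)
      positivity
    linarith [l1DistProxObj_proxL1Box_add_le (u := u) hμ hb hy]
  · rw [obj19_of_not_mem hy]
    exact EReal.coe_lt_top _

end Box

theorem stmt19_general (n : ℕ) (μ a : ℝ) (hμ : 0 < μ) (b u : Euc n)
    (hb : ∀ i, b i ∈ Set.Icc (0 : ℝ) a) :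
    ∃ xhat : Euc n,
      (∀ i, xhat i = min a (max 0
        (if b i + 1 / μ < u i then u i - 1 / μ
         else if u i < b i - 1 / μ then u i + 1 / μ else b i))) ∧
      (∀ y, obj19 n μ a b u xhat ≤ obj19 n μ a b u y) ∧
      (∀ y, (∀ z, obj19 n μ a b u y ≤ obj19 n μ a b u z) → y = xhat) :=
  ⟨proxL1Box μ a b u, fun _ => rfl, uniqMin_obj19_proxL1Box hμ hb⟩

/-- The function `x ↦ ‖x - b‖₁ + δ_{[0,a]^n}(x) + (μ/2)‖u - x‖²` has a unique minimizer over
`ℝ^n`, given componentwise by `x̂ᵢ = min(a, max(0, zᵢ))`, where `zᵢ = uᵢ - 1/μ` if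
`uᵢ > bᵢ + 1/μ`, `zᵢ = bᵢ` if `bᵢ - 1/μ ≤ uᵢ ≤ bᵢ + 1/μ`, and `zᵢ = uᵢ + 1/μ` if
`uᵢ < bᵢ - 1/μ`. -/
theorem stmt19 (n : ℕ) (μ a : ℝ) (hμ : 0 < μ) (ha : 0 < a) (b u : Euc n)
    (hb : ∀ i, b i ∈ Set.Icc (0 : ℝ) a) :
    ∃ xhat : Euc n,
      (∀ i, xhat i = min a (max 0
        (if b i + 1 / μ < u i then u i - 1 / μ
         else if u i < b i - 1 / μ then u i + 1 / μ else b i))) ∧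
      (∀ y, obj19 n μ a b u xhat ≤ obj19 n μ a b u y) ∧
      (∀ y, (∀ z, obj19 n μ a b u y ≤ obj19 n μ a b u z) → y = xhat) :=
  stmt19_general n μ a hμ b u hb
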